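/- Fix a directed graph C and a phase space function 𝒫: C₀ → Euc. If φ: Γ → Γ' is an étale map of finite graphs over C such that the induced fully faithful functor G(φ): G(Γ) → G(Γ') is essentially surjective, then the induced linear map 𝕍(φ): 𝕍(Γ') → 𝕍(Γ) is an isomorphism of vector spaces. -/

import Mathlib

/-! Since `φ` is étale, each `Ctrl(φ_a)` is an isomorphism, and conjugating by the `φ_a` turns
isomorphisms `I(φ a₁) ≅ I(φ a₂)` into isomorphisms `I(a₁) ≅ I(a₂)`; hence for `v ∈ 𝕍(Γ)` the
family `a ↦ Ctrl(φ_a)(v_a)` is invariant on the nodes `φ a`. Because every input tree of `Γ'`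
is isomorphic to one of these, an invariant family on them extends uniquely to an element of
`𝕍(Γ')`, transporting along any such isomorphism; this extension inverts `𝕍(φ)`. -/

/-- A directed graph: a set of edges, a set of nodes, and source/target maps. -/
structure DGraph : Type 1 where
  V : Type
  E : Type
  s : E → V
  t : E → V

/-- A map of directed graphs. -/
@[ext]
structure GraphMap (G G' : DGraph) where
  vMap : G.V → G'.V
  eMap : G.E → G'.E
  hs : ∀ e, G'.s (eMap e) = vMap (G.s e)
  ht : ∀ e, G'.t (eMap e) = vMap (G.t e)

namespace GraphMap

def id (G : DGraph) : GraphMap G G :=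
  ⟨fun v => v, fun e => e, fun _ => rfl, fun _ => rfl⟩

def comp {G₁ G₂ G₃ : DGraph} (g : GraphMap G₂ G₃) (f : GraphMap G₁ G₂) :
    GraphMap G₁ G₃ where
  vMap v := g.vMap (f.vMap v)
  eMap e := g.eMap (f.eMap e)
  hs e := by rw [g.hs, f.hs]
  ht e := by rw [g.ht, f.ht]

end GraphMap

/-- A graph colored by the graph `C`, i.e. a graph together with a map of graphs to `C`. -/
structure CGraph (C : DGraph) : Type 1 where
  gr : DGraph
  col : GraphMap gr C

/-- A map of graphs over `C`. -/
@[ext]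
structure CMap {C : DGraph} (Γ Γ' : CGraph C) where
  toMap : GraphMap Γ.gr Γ'.gr
  hv : ∀ v, Γ'.col.vMap (toMap.vMap v) = Γ.col.vMap v
  he : ∀ e, Γ'.col.eMap (toMap.eMap e) = Γ.col.eMap e

namespace CMap

variable {C : DGraph}

def id (Γ : CGraph C) : CMap Γ Γ := ⟨GraphMap.id _, fun _ => rfl, fun _ => rfl⟩

def comp {Γ₁ Γ₂ Γ₃ : CGraph C} (g : CMap Γ₂ Γ₃) (f : CMap Γ₁ Γ₂) : CMap Γ₁ Γ₃ where
  toMap := g.toMap.comp f.toMap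
  hv v := by
    show Γ₃.col.vMap (g.toMap.vMap (f.toMap.vMap v)) = Γ₁.col.vMap v
    rw [g.hv, f.hv]
  he e := by
    show Γ₃.col.eMap (g.toMap.eMap (f.toMap.eMap e)) = Γ₁.col.eMap e
    rw [g.he, f.he]

/-- A map of graphs over `C` is an isomorphism iff it is bijective on nodes and edges. -/
def IsIso {Γ Γ' : CGraph C} (φ : CMap Γ Γ') : Prop :=
  Function.Bijective φ.toMap.vMap ∧ Function.Bijective φ.toMap.eMap

theorem isIso_id (Γ : CGraph C) : (CMap.id Γ).IsIso :=
  ⟨Function.bijective_id, Function.bijective_id⟩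

theorem IsIso.comp {Γ₁ Γ₂ Γ₃ : CGraph C} {g : CMap Γ₂ Γ₃} {f : CMap Γ₁ Γ₂}
    (hg : g.IsIso) (hf : f.IsIso) : (g.comp f).IsIso :=
  ⟨hg.1.comp hf.1, hg.2.comp hf.2⟩

end CMap

variable {C : DGraph}

/-- The set of edges of `Γ` with target `a`; these are both the edges and the
leaves of the input tree `I(a)`. -/
abbrev inEdge (Γ : CGraph C) (a : Γ.gr.V) : Type := {e : Γ.gr.E // Γ.gr.t e = a}

/-- The input tree `I(a)` of a node `a` of a graph `Γ` over `C`, as a graph over `C`. -/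
def inTree (Γ : CGraph C) (a : Γ.gr.V) : CGraph C where
  gr :=
    { V := Unit ⊕ inEdge Γ a
      E := inEdge Γ a
      s := Sum.inr
      t := fun _ => Sum.inl () }
  col :=
    { vMap := Sum.elim (fun _ => Γ.col.vMap a) (fun e => Γ.col.vMap (Γ.gr.s e.1))
      eMap := fun e => Γ.col.eMap e.1
      hs := fun e => Γ.col.hs e.1
      ht := fun e => by
        show C.t (Γ.col.eMap e.1) = Γ.col.vMap a
        rw [Γ.col.ht e.1, e.2] }

/-- The edge map `I(a) → I(φ(a))` induced by a map `φ` of graphs over `C`. -/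
def liftEdge {Γ Γ' : CGraph C} (φ : CMap Γ Γ') (a : Γ.gr.V) (e : inEdge Γ a) :
    inEdge Γ' (φ.toMap.vMap a) :=
  ⟨φ.toMap.eMap e.1, by rw [φ.toMap.ht, e.2]⟩

/-- The map of input trees `φ_a : I(a) → I(φ(a))` induced by a map `φ` of graphs over `C`. -/
def inMap {Γ Γ' : CGraph C} (φ : CMap Γ Γ') (a : Γ.gr.V) :
    CMap (inTree Γ a) (inTree Γ' (φ.toMap.vMap a)) where
  toMap :=
    { vMap := Sum.elim (fun _ => Sum.inl ()) (fun e => Sum.inr (liftEdge φ a e))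
      eMap := liftEdge φ a
      hs := fun _ => rfl
      ht := fun _ => rfl }
  hv v := by
    cases v with
    | inl u => exact φ.hv a
    | inr e =>
      show Γ'.col.vMap (Γ'.gr.s (φ.toMap.eMap e.1)) = Γ.col.vMap (Γ.gr.s e.1)
      rw [φ.toMap.hs, φ.hv]
  he e := φ.he e.1

/-- A map of graphs over `C` is *étale* if the induced maps of input trees are all
isomorphisms of graphs over `C`. -/
def IsEtale {Γ Γ' : CGraph C} (φ : CMap Γ Γ') : Prop :=
  ∀ a : Γ.gr.V, (inMap φ a).IsIso

section TreeLemmas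

variable {Γ Γ' : CGraph C} {a : Γ.gr.V} {b : Γ'.gr.V}

theorem CMap.vMap_inr (σ : CMap (inTree Γ a) (inTree Γ' b)) (e : inEdge Γ a) :
    σ.toMap.vMap (Sum.inr e) = Sum.inr (σ.toMap.eMap e) :=
  (σ.toMap.hs e).symm

/-- Maps of input trees preserve the colors of the sources of the leaves. -/
theorem leafColor (σ : CMap (inTree Γ a) (inTree Γ' b)) (e : inEdge Γ a) :
    Γ'.col.vMap (Γ'.gr.s (σ.toMap.eMap e).1) = Γ.col.vMap (Γ.gr.s e.1) := by
  have h := σ.hv (Sum.inr e)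
  rw [CMap.vMap_inr] at h
  exact h

/-- An isomorphism of input trees maps the root to the root. -/
theorem rootFixed (σ : CMap (inTree Γ a) (inTree Γ' b)) (hσ : σ.IsIso) :
    σ.toMap.vMap (Sum.inl ()) = Sum.inl () := by
  rcases h : σ.toMap.vMap (Sum.inl ()) with u | e'
  · cases u; rfl
  · obtain ⟨e, rfl⟩ := hσ.2.2 e'
    have ht : (Sum.inl () : Unit ⊕ inEdge Γ' b) = σ.toMap.vMap (Sum.inl ()) := σ.toMap.ht e
    rw [h] at ht
    exact absurd ht Sum.inl_ne_inr

/-- An isomorphism of input trees preserves the color of the root. -/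
theorem rootColor (σ : CMap (inTree Γ a) (inTree Γ' b)) (hσ : σ.IsIso) :
    Γ'.col.vMap b = Γ.col.vMap a := by
  have h := σ.hv (Sum.inl ())
  rw [rootFixed σ hσ] at h
  exact h

end TreeLemmas

/-! ### Phase spaces and control systems (Euclidean case) -/

set_option linter.unusedSectionVars false

variable (P : C.V → Type)
variable [∀ c, NormedAddCommGroup (P c)] [∀ c, NormedSpace ℝ (P c)]
  [∀ c, FiniteDimensional ℝ (P c)]

/-- Transport along an equality of colors. -/
def pcast {c c' : C.V} (h : c = c') : P c ≃ₗ[ℝ] P c' := by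
  subst h; exact LinearEquiv.refl ℝ (P c)

/-- The (linear) map `ℙ f : ℙ X → ℙ Y` induced by a map `f : Y → X` of sets over the
set of colors. -/
def phasePull {X Y : Type} (α : X → C.V) (β : Y → C.V) (f : Y → X)
    (hc : ∀ y, α (f y) = β y) :
    (∀ x, P (α x)) →ₗ[ℝ] (∀ y, P (β y)) where
  toFun v y := pcast P (hc y) (v (f y))
  map_add' u v := by funext y; simp
  map_smul' r v := by funext y; simp

theorem pcast_contDiff {c c' : C.V} (h : c = c') :
    ContDiff ℝ (⊤ : ℕ∞) (pcast P h) := by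
  subst h; exact contDiff_id

theorem phasePull_contDiff {X Y : Type} [Fintype X] [Fintype Y]
    (α : X → C.V) (β : Y → C.V) (f : Y → X) (hc : ∀ y, α (f y) = β y) :
    ContDiff ℝ (⊤ : ℕ∞) (phasePull P α β f hc) :=
  contDiff_pi.2 fun y =>
    (pcast_contDiff P (hc y)).comp
      ((ContinuousLinearMap.proj (R := ℝ) (φ := fun x => P (α x)) (f y)).contDiff)

/-- The vector space of smooth maps between two Euclidean spaces, as a submodule of the
space of all maps. -/
def SmoothMaps (V W : Type) [NormedAddCommGroup V] [NormedSpace ℝ V]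
    [NormedAddCommGroup W] [NormedSpace ℝ W] : Submodule ℝ (V → W) where
  carrier := {f | ContDiff ℝ (⊤ : ℕ∞) f}
  add_mem' := fun {f g} hf hg => by
    simp only [Set.mem_setOf_eq] at *
    exact hf.add hg
  zero_mem' := by
    simp only [Set.mem_setOf_eq]
    exact contDiff_const
  smul_mem' := fun c f hf => by
    simp only [Set.mem_setOf_eq] at *
    exact hf.const_smul c

theorem mem_smoothMaps_iff {V W : Type} [NormedAddCommGroup V] [NormedSpace ℝ V]
    [NormedAddCommGroup W] [NormedSpace ℝ W] (f : V → W) :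
    f ∈ SmoothMaps V W ↔ ContDiff ℝ (⊤ : ℕ∞) f := Iff.rfl

noncomputable instance instFintypeInEdge (Γ : CGraph C) [Fintype Γ.gr.E] (a : Γ.gr.V) :
    Fintype (inEdge Γ a) := Fintype.ofFinite _

/-- The phase space `ℙ(lv I(a))` of the leaves of the input tree of `a`. -/
abbrev LeafSpace (Γ : CGraph C) (a : Γ.gr.V) : Type :=
  ∀ e : inEdge Γ a, P (Γ.col.vMap (Γ.gr.s e.1))

/-- The space of control systems associated to the input tree of a node `a`:
all smooth maps from the phase space of the leaves to the phase space of the root. -/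
noncomputable def Ctrl (Γ : CGraph C) [Fintype Γ.gr.E] (a : Γ.gr.V) :
    Submodule ℝ (LeafSpace P Γ a → P (Γ.col.vMap a)) :=
  SmoothMaps _ _

/-- The map `ℙ(σ|_{lv}) : ℙ(lv I(b)) → ℙ(lv I(a))` induced by a map of input trees
`σ : I(a) → I(b)`. -/
noncomputable def leafPull {Γ Γ' : CGraph C} [Fintype Γ.gr.E] [Fintype Γ'.gr.E]
    {a : Γ.gr.V} {b : Γ'.gr.V} (σ : CMap (inTree Γ a) (inTree Γ' b)) :
    LeafSpace P Γ' b →ₗ[ℝ] LeafSpace P Γ a :=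
  phasePull P (fun e' : inEdge Γ' b => Γ'.col.vMap (Γ'.gr.s e'.1))
    (fun e : inEdge Γ a => Γ.col.vMap (Γ.gr.s e.1)) σ.toMap.eMap (leafColor σ)

theorem leafPull_contDiff {Γ Γ' : CGraph C} [Fintype Γ.gr.E] [Fintype Γ'.gr.E]
    {a : Γ.gr.V} {b : Γ'.gr.V} (σ : CMap (inTree Γ a) (inTree Γ' b)) :
    ContDiff ℝ (⊤ : ℕ∞) (leafPull P σ) :=
  phasePull_contDiff P _ _ _ _

/-- The action `Ctrl(σ) X = X ∘ ℙ(σ|_{lv})` of an isomorphism of input trees on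
control systems. -/
noncomputable def ctrlMap {Γ Γ' : CGraph C} [Fintype Γ.gr.E] [Fintype Γ'.gr.E]
    {a : Γ.gr.V} {b : Γ'.gr.V}
    (σ : CMap (inTree Γ a) (inTree Γ' b)) (hσ : σ.IsIso) :
    ↥(Ctrl P Γ a) →ₗ[ℝ] ↥(Ctrl P Γ' b) where
  toFun X :=
    ⟨fun v => pcast P (rootColor σ hσ).symm (X.1 (leafPull P σ v)),
      by
        have hX : ContDiff ℝ (⊤ : ℕ∞) X.1 := X.2
        exact (pcast_contDiff P (rootColor σ hσ).symm).comp
          (hX.comp (leafPull_contDiff P σ))⟩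
  map_add' X Y := by
    apply Subtype.ext
    funext v
    simp
  map_smul' r X := by
    apply Subtype.ext
    funext v
    simp

/-- The space of virtual groupoid-invariant vector fields on a finite graph over `C`:
the invariants (limit) of the action of the symmetry groupoid `G(Γ)` on the spaces of
control systems of the input trees. -/
noncomputable def VSpace (Γ : CGraph C) [Fintype Γ.gr.E] :
    Submodule ℝ (∀ a : Γ.gr.V, ↥(Ctrl P Γ a)) where
  carrier := {X | ∀ (a b : Γ.gr.V) (σ : CMap (inTree Γ a) (inTree Γ b)) (hσ : σ.IsIso),
    ctrlMap P σ hσ (X a) = X b}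
  add_mem' := fun hX hY a b σ hσ => by
    simp only [Set.mem_setOf_eq] at *
    simp only [Pi.add_apply, map_add]
    rw [hX a b σ hσ, hY a b σ hσ]
  zero_mem' := fun a b σ hσ => by simp
  smul_mem' := fun r X hX a b σ hσ => by
    simp only [Set.mem_setOf_eq] at *
    simp only [Pi.smul_apply, map_smul]
    rw [hX a b σ hσ]

/-- The canonical projection `ϖ_a : 𝕍(Γ) → Ctrl(I(a))`. -/
noncomputable def Vproj (Γ : CGraph C) [Fintype Γ.gr.E] (a : Γ.gr.V) :
    ↥(VSpace P Γ) →ₗ[ℝ] ↥(Ctrl P Γ a) :=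
  (LinearMap.proj a).comp (VSpace P Γ).subtype

/-- The total phase space `ℙ Γ₀` of a graph over `C`. -/
abbrev TotalPhase (Γ : CGraph C) : Type := ∀ a : Γ.gr.V, P (Γ.col.vMap a)

/-- The map `ℙ(ξ|_{lv I(a)}) : ℙ Γ₀ → ℙ lv I(a)` induced by the canonical map
`ξ : I(a) → Γ`. -/
noncomputable def leafRestrict (Γ : CGraph C) [Fintype Γ.gr.E] (a : Γ.gr.V) :
    TotalPhase P Γ →ₗ[ℝ] LeafSpace P Γ a :=
  phasePull P Γ.col.vMap (fun e : inEdge Γ a => Γ.col.vMap (Γ.gr.s e.1))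
    (fun e : inEdge Γ a => Γ.gr.s e.1) (fun _ => rfl)

/-- The space of (smooth) vector fields on the total phase space of `Γ`. -/
noncomputable def VF (Γ : CGraph C) [Fintype Γ.gr.V] :
    Submodule ℝ (TotalPhase P Γ → TotalPhase P Γ) :=
  SmoothMaps _ _

/-- The map `S_Γ` sending a virtual groupoid-invariant vector field to an actual
vector field on the phase space `ℙ Γ₀`; its component at a node `a` is
`ϖ_a(v) ∘ ℙ(ξ|_{lv I(a)})`. -/
noncomputable def SMap (Γ : CGraph C) [Fintype Γ.gr.E] [Fintype Γ.gr.V] :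
    ↥(VSpace P Γ) →ₗ[ℝ] ↥(VF P Γ) where
  toFun v :=
    ⟨fun x a => (v.1 a).1 (leafRestrict P Γ a x),
      contDiff_pi.2 fun a =>
        ContDiff.comp (show ContDiff ℝ (⊤ : ℕ∞) (v.1 a).1 from (v.1 a).2)
          (phasePull_contDiff P _ _ _ _)⟩
  map_add' u v := by
    apply Subtype.ext
    funext x a
    simp
  map_smul' r v := by
    apply Subtype.ext
    funext x a
    simp

theorem pcast_pcast {c₁ c₂ c₃ : C.V} (h₁ : c₁ = c₂) (h₂ : c₂ = c₃) (x : P c₁) :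
    pcast P h₂ (pcast P h₁ x) = pcast P (h₁.trans h₂) x := by
  subst h₁ h₂; rfl

namespace CMap

variable {Γ Γ' : CGraph C}

noncomputable def inv (φ : CMap Γ Γ') (h : φ.IsIso) : CMap Γ' Γ where
  toMap :=
    { vMap := (Equiv.ofBijective _ h.1).symm
      eMap := (Equiv.ofBijective _ h.2).symm
      hs := fun e => h.1.1 (by simp [← φ.toMap.hs, Equiv.ofBijective_apply_symm_apply])
      ht := fun e => h.1.1 (by simp [← φ.toMap.ht, Equiv.ofBijective_apply_symm_apply]) }
  hv v := by simp [← φ.hv, Equiv.ofBijective_apply_symm_apply]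
  he e := by simp [← φ.he, Equiv.ofBijective_apply_symm_apply]

theorem isIso_inv (φ : CMap Γ Γ') (h : φ.IsIso) : (φ.inv h).IsIso :=
  ⟨(Equiv.ofBijective _ h.1).symm.bijective, (Equiv.ofBijective _ h.2).symm.bijective⟩

theorem inv_comp (φ : CMap Γ Γ') (h : φ.IsIso) : (φ.inv h).comp φ = CMap.id Γ :=
  CMap.ext <| GraphMap.ext (funext (Equiv.ofBijective _ h.1).symm_apply_apply)
    (funext (Equiv.ofBijective _ h.2).symm_apply_apply)

theorem comp_inv (φ : CMap Γ Γ') (h : φ.IsIso) : φ.comp (φ.inv h) = CMap.id Γ' :=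
  CMap.ext <| GraphMap.ext (funext (Equiv.ofBijective _ h.1).apply_symm_apply)
    (funext (Equiv.ofBijective _ h.2).apply_symm_apply)

end CMap

theorem Vproj_apply (Γ : CGraph C) [Fintype Γ.gr.E] (a : Γ.gr.V) (w : ↥(VSpace P Γ)) :
    Vproj P Γ a w = w.1 a := rfl

section CtrlFunctor

variable {Γ₁ Γ₂ Γ₃ : CGraph C} [Fintype Γ₁.gr.E] [Fintype Γ₂.gr.E] [Fintype Γ₃.gr.E]
  {a₁ : Γ₁.gr.V} {a₂ : Γ₂.gr.V} {a₃ : Γ₃.gr.V}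

theorem ctrlMap_id (X : ↥(Ctrl P Γ₁ a₁)) :
    ctrlMap P (CMap.id (inTree Γ₁ a₁)) (CMap.isIso_id _) X = X := rfl

theorem ctrlMap_comp (σ : CMap (inTree Γ₁ a₁) (inTree Γ₂ a₂))
    (τ : CMap (inTree Γ₂ a₂) (inTree Γ₃ a₃)) (hσ : σ.IsIso) (hτ : τ.IsIso)
    (X : ↥(Ctrl P Γ₁ a₁)) :
    ctrlMap P (τ.comp σ) (hτ.comp hσ) X = ctrlMap P τ hτ (ctrlMap P σ hσ X) := by
  refine Subtype.ext (funext fun w => ?_)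
  change pcast P _ (X.1 (leafPull P (τ.comp σ) w)) =
    pcast P _ (pcast P _ (X.1 (leafPull P σ (leafPull P τ w))))
  have hpull : leafPull P (τ.comp σ) w = leafPull P σ (leafPull P τ w) :=
    funext fun e => (pcast_pcast P _ _ _).symm
  rw [hpull, pcast_pcast]

theorem ctrlMap_inv_ctrlMap (σ : CMap (inTree Γ₁ a₁) (inTree Γ₂ a₂)) (hσ : σ.IsIso)
    (X : ↥(Ctrl P Γ₁ a₁)) :
    ctrlMap P (σ.inv hσ) (σ.isIso_inv hσ) (ctrlMap P σ hσ X) = X := by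
  rw [← ctrlMap_comp]
  simp only [CMap.inv_comp, ctrlMap_id]

theorem ctrlMap_ctrlMap_inv (σ : CMap (inTree Γ₁ a₁) (inTree Γ₂ a₂)) (hσ : σ.IsIso)
    (X : ↥(Ctrl P Γ₂ a₂)) :
    ctrlMap P σ hσ (ctrlMap P (σ.inv hσ) (σ.isIso_inv hσ) X) = X := by
  rw [← ctrlMap_comp]
  simp only [CMap.comp_inv, ctrlMap_id]

theorem ctrlMap_injective (σ : CMap (inTree Γ₁ a₁) (inTree Γ₂ a₂)) (hσ : σ.IsIso) :
    Function.Injective (ctrlMap P σ hσ) :=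
  Function.LeftInverse.injective (ctrlMap_inv_ctrlMap P σ hσ)

end CtrlFunctor

section Extension

variable {Δ : CGraph C} [Fintype Δ.gr.E] {ι : Type*}

def EssSurj (f : ι → Δ.gr.V) : Prop :=
  ∀ b, ∃ i, ∃ σ : CMap (inTree Δ (f i)) (inTree Δ b), σ.IsIso

def IsInvariantFamily (f : ι → Δ.gr.V) (x : ∀ i, ↥(Ctrl P Δ (f i))) : Prop :=
  ∀ i j (σ : CMap (inTree Δ (f i)) (inTree Δ (f j))) (hσ : σ.IsIso), ctrlMap P σ hσ (x i) = x j

variable {f : ι → Δ.gr.V}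

theorem IsInvariantFamily.ctrlMap_eq {x : ∀ i, ↥(Ctrl P Δ (f i))} (hx : IsInvariantFamily P f x)
    {i j : ι} {b : Δ.gr.V} (σ : CMap (inTree Δ (f i)) (inTree Δ b)) (hσ : σ.IsIso)
    (τ : CMap (inTree Δ (f j)) (inTree Δ b)) (hτ : τ.IsIso) :
    ctrlMap P σ hσ (x i) = ctrlMap P τ hτ (x j) := by
  rw [← hx i j _ ((τ.isIso_inv hτ).comp hσ), ctrlMap_comp P σ (τ.inv hτ) hσ (τ.isIso_inv hτ),
    ctrlMap_ctrlMap_inv]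

theorem VSpace.ext_of_essSurj (hf : EssSurj f) {w₁ w₂ : ↥(VSpace P Δ)}
    (h : ∀ i, w₁.1 (f i) = w₂.1 (f i)) : w₁ = w₂ := by
  refine Subtype.ext (funext fun b => ?_)
  obtain ⟨i, σ, hσ⟩ := hf b
  rw [← w₁.2 _ _ σ hσ, ← w₂.2 _ _ σ hσ, h]

theorem VSpace.exists_eq_of_essSurj (hf : EssSurj f) {x : ∀ i, ↥(Ctrl P Δ (f i))}
    (hx : IsInvariantFamily P f x) : ∃ w : ↥(VSpace P Δ), ∀ i, w.1 (f i) = x i := by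
  choose i σ hσ using hf
  refine ⟨⟨fun b => ctrlMap P (σ b) (hσ b) (x (i b)), fun b₁ b₂ τ hτ => ?_⟩, fun j => ?_⟩
  · rw [← ctrlMap_comp]
    exact hx.ctrlMap_eq P _ _ _ _
  · exact (hx.ctrlMap_eq P _ _ _ (CMap.isIso_id _)).trans (ctrlMap_id P _)

end Extension

theorem IsEtale.isInvariantFamily_ctrlMap {Γ Γ' : CGraph C} [Fintype Γ.gr.E] [Fintype Γ'.gr.E]
    {φ : CMap Γ Γ'} (hφ : IsEtale φ) (v : ↥(VSpace P Γ)) :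
    IsInvariantFamily P φ.toMap.vMap fun a => ctrlMap P (inMap φ a) (hφ a) (v.1 a) := by
  intro a₁ a₂ τ hτ
  -- `φ_{a₂}⁻¹ ∘ τ ∘ φ_{a₁}` is a morphism of `G(Γ)`, and `v` is invariant under it.
  have hτφ : (τ.comp (inMap φ a₁)).IsIso := hτ.comp (hφ a₁)
  dsimp only
  rw [← v.2 a₁ a₂ _ (((inMap φ a₂).isIso_inv (hφ a₂)).comp hτφ),
    ctrlMap_comp P _ _ hτφ ((inMap φ a₂).isIso_inv (hφ a₂)), ctrlMap_ctrlMap_inv,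
    ctrlMap_comp P _ _ (hφ a₁) hτ]

/-- If `φ : Γ → Γ'` is an étale map of finite graphs over `C` such that
the induced (fully faithful) functor `G(φ) : G(Γ) → G(Γ')` is essentially surjective,
then the induced linear map `𝕍(φ) : 𝕍(Γ') → 𝕍(Γ)` — i.e. the unique linear map `L`
with `ϖ_a ∘ L = Ctrl(φ_a)⁻¹ ∘ ϖ_{φ(a)}` for all nodes `a` — is an isomorphism of
vector spaces. -/
theorem Vmap_isIso_of_essSurj {C : DGraph} (P : C.V → Type)
    [∀ c, NormedAddCommGroup (P c)] [∀ c, NormedSpace ℝ (P c)]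
    [∀ c, FiniteDimensional ℝ (P c)]
    {Γ Γ' : CGraph C} [Fintype Γ.gr.E] [Fintype Γ'.gr.E]
    (φ : CMap Γ Γ') (hφ : IsEtale φ)
    (hsurj : ∀ b' : Γ'.gr.V, ∃ a : Γ.gr.V,
      ∃ σ : CMap (inTree Γ' (φ.toMap.vMap a)) (inTree Γ' b'), σ.IsIso)
    (L : ↥(VSpace P Γ') →ₗ[ℝ] ↥(VSpace P Γ))
    (hL : ∀ (a : Γ.gr.V) (w : ↥(VSpace P Γ')),
      ctrlMap P (inMap φ a) (hφ a) (Vproj P Γ a (L w)) =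
        Vproj P Γ' (φ.toMap.vMap a) w) :
    Function.Bijective L := by
  simp only [Vproj_apply] at hL
  refine ⟨fun w₁ w₂ h => VSpace.ext_of_essSurj P hsurj fun a => ?_, fun v => ?_⟩
  · rw [← hL a w₁, ← hL a w₂, h]
  · obtain ⟨w, hw⟩ := VSpace.exists_eq_of_essSurj P hsurj (hφ.isInvariantFamily_ctrlMap P v)
    exact ⟨w, Subtype.ext <| funext fun a => ctrlMap_injective P _ (hφ a) ((hL a w).trans (hw a))⟩
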